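/- arXiv:2312.03218 — 8 statements merged into one kernel-verified Lean document; each statement's English description precedes it below -/
import Mathlib

section
/- Let E be a real inner product space, let u and v be unit vectors in E, and let P be the orthogonal projection of E onto a complete subspace, with Pv ≠ 0. Then ⟨Pv/‖Pv‖, u⟩² − ⟨v, u⟩² ≤ 2(1 − ‖Pv‖) + 2‖v − Pv‖. -/
open scoped RealInnerProductSpace

/-! Write `p = Pv/‖Pv‖`. By the difference of squares and Cauchy–Schwarz,
`⟪p, u⟫² − ⟪v, u⟫² = ⟪p + v, u⟫⟪p − v, u⟫ ≤ ‖p + v‖‖p − v‖ ≤ 2‖p − v‖`, and going through `Pv`,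
`‖p − v‖ ≤ ‖p − Pv‖ + ‖Pv − v‖ = (1 − ‖Pv‖) + ‖v − Pv‖` since `‖Pv‖ ≤ 1`. -/

theorem real_inner_sq_sub_inner_sq_le {F : Type*} [NormedAddCommGroup F] [InnerProductSpace ℝ F]
    (p v u : F) : ⟪p, u⟫ ^ 2 - ⟪v, u⟫ ^ 2 ≤ ‖p + v‖ * ‖p - v‖ * ‖u‖ ^ 2 :=
  calc ⟪p, u⟫ ^ 2 - ⟪v, u⟫ ^ 2 = ⟪p + v, u⟫ * ⟪p - v, u⟫ := by
        rw [inner_add_left, inner_sub_left]; ring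
    _ ≤ |⟪p + v, u⟫| * |⟪p - v, u⟫| := by rw [← abs_mul]; exact le_abs_self _
    _ ≤ (‖p + v‖ * ‖u‖) * (‖p - v‖ * ‖u‖) := by
        gcongr <;> exact abs_real_inner_le_norm _ _
    _ = ‖p + v‖ * ‖p - v‖ * ‖u‖ ^ 2 := by ring

theorem norm_inv_norm_smul_sub_self {F : Type*} [NormedAddCommGroup F] [NormedSpace ℝ F]
    {w : F} (hw : w ≠ 0) : ‖‖w‖⁻¹ • w - w‖ = |1 - ‖w‖| := by
  have hw' : ‖w‖ ≠ 0 := norm_ne_zero_iff.mpr hw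
  calc ‖‖w‖⁻¹ • w - w‖ = |‖w‖⁻¹ - 1| * ‖w‖ := by
        rw [← Real.norm_eq_abs, ← norm_smul, sub_smul, one_smul]
    _ = |1 - ‖w‖| := by
        rw [← abs_norm w, ← abs_mul, abs_norm, sub_mul, inv_mul_cancel₀ hw', one_mul, abs_sub_comm]

theorem norm_inv_norm_smul_sub_le {F : Type*} [NormedAddCommGroup F] [NormedSpace ℝ F]
    {w : F} (hw : w ≠ 0) (hw₁ : ‖w‖ ≤ 1) (v : F) :
    ‖‖w‖⁻¹ • w - v‖ ≤ (1 - ‖w‖) + ‖v - w‖ :=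
  calc ‖‖w‖⁻¹ • w - v‖ ≤ ‖‖w‖⁻¹ • w - w‖ + ‖w - v‖ := norm_sub_le_norm_sub_add_norm_sub _ _ _
    _ = (1 - ‖w‖) + ‖v - w‖ := by
        rw [norm_inv_norm_smul_sub_self hw, abs_of_nonneg (sub_nonneg.mpr hw₁), norm_sub_rev]

/-- Let `E` be a real inner product space, let `u` and `v` be unit vectors in
`E`, and let `P` be the orthogonal projection of `E` onto a complete subspace `K`, with
`Pv ≠ 0`. Then `⟨Pv/‖Pv‖, u⟩² − ⟨v, u⟩² ≤ 2(1 − ‖Pv‖) + 2‖v − Pv‖`. -/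
theorem stmt_3 {E : Type*} [NormedAddCommGroup E] [InnerProductSpace ℝ E]
    (u v : E) (hu : ‖u‖ = 1) (hv : ‖v‖ = 1)
    (K : Submodule ℝ E) [CompleteSpace K]
    (hPv : (K.orthogonalProjectionOnto v : E) ≠ 0) :
    ⟪‖(K.orthogonalProjectionOnto v : E)‖⁻¹ • (K.orthogonalProjectionOnto v : E), u⟫ ^ 2
        - ⟪v, u⟫ ^ 2
      ≤ 2 * (1 - ‖(K.orthogonalProjectionOnto v : E)‖)
        + 2 * ‖v - (K.orthogonalProjectionOnto v : E)‖ := by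
  set w : E := (K.orthogonalProjectionOnto v : E)
  have hw₁ : ‖w‖ ≤ 1 := hv ▸ K.norm_orthogonalProjectionOnto_apply_le v
  have hpv : ‖‖w‖⁻¹ • w + v‖ ≤ 2 :=
    calc ‖‖w‖⁻¹ • w + v‖ ≤ ‖‖w‖⁻¹ • w‖ + ‖v‖ := norm_add_le _ _
      _ = 2 := by
        rw [norm_smul, norm_inv, norm_norm, inv_mul_cancel₀ (norm_ne_zero_iff.mpr hPv), hv]
        norm_num
  calc ⟪‖w‖⁻¹ • w, u⟫ ^ 2 - ⟪v, u⟫ ^ 2 ≤ ‖‖w‖⁻¹ • w + v‖ * ‖‖w‖⁻¹ • w - v‖ * ‖u‖ ^ 2 :=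
        real_inner_sq_sub_inner_sq_le _ _ _
    _ ≤ 2 * ((1 - ‖w‖) + ‖v - w‖) := by
        rw [hu, one_pow, mul_one]
        gcongr
        exact norm_inv_norm_smul_sub_le hPv hw₁ v
    _ = 2 * (1 - ‖w‖) + 2 * ‖v - w‖ := mul_add _ _ _
end

section
/- Let A be a d×d real symmetric positive semidefinite matrix admitting an orthonormal basis u₁, …, u_d of ℝ^d consisting of eigenvectors of A with corresponding eigenvalues λ₁, …, λ_d, and let λ_min = minᵢ λᵢ. Let v ∈ ℝ^d be a unit vector and set a = vᵀ A v. Let S = { i : λᵢ ≤ a/2 } and ε = Σ_{i ∈ S} ⟨v, uᵢ⟩². Then for every x ∈ ℝ^d, xᵀ (A − (a/5) v vᵀ) x ≥ min{ a/10, λ_min − (2a/5)·ε } · ‖x‖². -/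
open scoped BigOperators RealInnerProductSpace

/-!
In coordinates `b i = ⟪v, u i⟫`, `c i = ⟪x, u i⟫` the quadratic form is
`∑ λᵢ cᵢ² - (a/5) (∑ bᵢ cᵢ)²`. Split the indices into the low eigenvalues `λᵢ ≤ a/2` and the
high ones. By Cauchy–Schwarz on each part, `(∑ bᵢ cᵢ)² ≤ 2 ε P + 2 Q`, where `P` and `Q` are the
masses of `x` on the low and high parts. The low part contributes at least `λ_min P` and the high
part at least `(a/2) Q`, so the form is at least `(λ_min - 2aε/5) P + (a/10) Q`.
-/

open Finset Matrix

theorem sq_sum_mul_le_of_sum_filter_not_sq_le_one {ι : Type*} [Fintype ι] (p : ι → Prop)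
    [DecidablePred p] {b : ι → ℝ} (hb : ∑ i with ¬p i, b i ^ 2 ≤ 1) (c : ι → ℝ) :
    (∑ i, b i * c i) ^ 2 ≤
      2 * (∑ i with p i, b i ^ 2) * ∑ i with p i, c i ^ 2 + 2 * ∑ i with ¬p i, c i ^ 2 := by
  rw [← sum_filter_add_sum_filter_not univ p]
  have hp := sum_mul_sq_le_sq_mul_sq {i | p i} b c
  have hnp : (∑ i with ¬p i, b i * c i) ^ 2 ≤ ∑ i with ¬p i, c i ^ 2 :=
    (sum_mul_sq_le_sq_mul_sq _ b c).trans
      (mul_le_of_le_one_left (sum_nonneg fun i _ => sq_nonneg _) hb)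
  nlinarith [sq_nonneg (∑ i with p i, b i * c i - ∑ i with ¬p i, b i * c i)]

theorem mul_sum_sq_add_mul_sum_sq_le_sum_mul_sq {ι : Type*} [Fintype ι] {lam : ι → ℝ}
    {lmin : ℝ} (hlmin : ∀ i, lmin ≤ lam i) (t : ℝ) (c : ι → ℝ) :
    lmin * ∑ i with lam i ≤ t, c i ^ 2 + t * ∑ i with ¬lam i ≤ t, c i ^ 2 ≤
      ∑ i, lam i * c i ^ 2 := by
  rw [← sum_filter_add_sum_filter_not univ (fun i => lam i ≤ t), mul_sum, mul_sum]
  gcongr with i _ i hi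
  · exact hlmin i
  · exact (not_le.mp (mem_filter.mp hi).2).le

theorem min_mul_sum_sq_le_sum_mul_sq_sub_sq_sum_mul {ι : Type*} [Fintype ι]
    {lam b : ι → ℝ} {a lmin : ℝ} (ha : 0 ≤ a) (hb : ∑ i, b i ^ 2 ≤ 1)
    (hlmin : ∀ i, lmin ≤ lam i) (c : ι → ℝ) :
    min (a / 10) (lmin - 2 * a / 5 * ∑ i with lam i ≤ a / 2, b i ^ 2) * ∑ i, c i ^ 2 ≤
      ∑ i, lam i * c i ^ 2 - a / 5 * (∑ i, b i * c i) ^ 2 := by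
  set low : Finset ι := {i | lam i ≤ a / 2}
  set high : Finset ι := {i | ¬lam i ≤ a / 2}
  set m := min (a / 10) (lmin - 2 * a / 5 * ∑ i ∈ low, b i ^ 2)
  have hb_high : ∑ i ∈ high, b i ^ 2 ≤ 1 :=
    (sum_le_sum_of_subset_of_nonneg (subset_univ _) fun i _ _ => sq_nonneg _).trans hb
  have hCS := sq_sum_mul_le_of_sum_filter_not_sq_le_one (fun i => lam i ≤ a / 2) hb_high c
  have hquad := mul_sum_sq_add_mul_sum_sq_le_sum_mul_sq hlmin (a / 2) c
  have hlow : m * ∑ i ∈ low, c i ^ 2 ≤ (lmin - 2 * a / 5 * ∑ i ∈ low, b i ^ 2) *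
      ∑ i ∈ low, c i ^ 2 :=
    mul_le_mul_of_nonneg_right (min_le_right _ _) (sum_nonneg fun i _ => sq_nonneg _)
  have hhigh : m * ∑ i ∈ high, c i ^ 2 ≤ a / 10 * ∑ i ∈ high, c i ^ 2 :=
    mul_le_mul_of_nonneg_right (min_le_left _ _) (sum_nonneg fun i _ => sq_nonneg _)
  rw [← sum_filter_add_sum_filter_not univ (fun i => lam i ≤ a / 2)]
  linarith [mul_le_mul_of_nonneg_left hCS (by positivity : 0 ≤ a / 5)]

theorem OrthonormalBasis.inner_self_map_eq_sum {ι E : Type*} [Fintype ι] [NormedAddCommGroup E]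
    [InnerProductSpace ℝ E] (B : OrthonormalBasis ι ℝ E) {T : E →ₗ[ℝ] E} {lam : ι → ℝ}
    (hT : ∀ i, T (B i) = lam i • B i) (x : E) :
    ⟪x, T x⟫ = ∑ i, lam i * ⟪x, B i⟫ ^ 2 := by
  nth_rw 2 [← B.sum_repr' x]
  simp only [map_sum, map_smul, hT, inner_sum, real_inner_smul_right, real_inner_comm x]
  exact sum_congr rfl fun i _ => by ring

theorem Matrix.dotProduct_mulVec_eq_sum_of_mulVec_eq_smul {n : Type*} [Fintype n]
    [DecidableEq n] {A : Matrix n n ℝ} (B : OrthonormalBasis n ℝ (EuclideanSpace ℝ n))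
    {lam : n → ℝ} (hA : ∀ i, A *ᵥ B i = lam i • B i) (x : EuclideanSpace ℝ n) :
    x ⬝ᵥ A *ᵥ x = ∑ i, lam i * ⟪x, B i⟫ ^ 2 := by
  have hT (i : n) : toLpLin 2 2 A (B i) = lam i • B i := by
    rw [toLpLin_apply, hA]
    rfl
  rw [← B.inner_self_map_eq_sum hT, EuclideanSpace.inner_eq_star_dotProduct, toLpLin_apply,
    star_trivial, dotProduct_comm]

theorem Matrix.dotProduct_sub_smul_vecMulVec_mulVec {n R : Type*} [Fintype n] [CommRing R]
    (A : Matrix n n R) (r : R) (v x : n → R) :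
    x ⬝ᵥ (A - r • vecMulVec v v) *ᵥ x = x ⬝ᵥ A *ᵥ x - r * (v ⬝ᵥ x) ^ 2 := by
  rw [sub_mulVec, dotProduct_sub, smul_mulVec, dotProduct_smul, vecMulVec_mulVec,
    op_smul_eq_smul, dotProduct_smul, dotProduct_comm x v, smul_eq_mul, smul_eq_mul]
  ring

theorem stmt_4_general (d : ℕ) (A : Matrix (Fin d) (Fin d) ℝ) (hA : A.PosSemidef)
    (u : Fin d → EuclideanSpace ℝ (Fin d)) (hu : Orthonormal ℝ u)
    (hspan : Submodule.span ℝ (Set.range u) = ⊤)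
    (lam : Fin d → ℝ) (heig : ∀ i, A.mulVec (u i) = lam i • u i)
    (lmin : ℝ) (hlmin : ∀ i, lmin ≤ lam i)
    (v : EuclideanSpace ℝ (Fin d)) (hv : ‖v‖ = 1)
    (a : ℝ) (ha : a = dotProduct v (A.mulVec v))
    (eps : ℝ)
    (heps : eps = ∑ i ∈ Finset.univ.filter fun i => lam i ≤ a / 2, ⟪v, u i⟫ ^ 2) :
    ∀ x : EuclideanSpace ℝ (Fin d),
      min (a / 10) (lmin - (2 * a / 5) * eps) * ‖x‖ ^ 2
        ≤ dotProduct x ((A - (a / 5) • Matrix.vecMulVec v v).mulVec x) := by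
  intro x
  obtain ⟨B, rfl⟩ : ∃ B : OrthonormalBasis (Fin d) ℝ (EuclideanSpace ℝ (Fin d)), ⇑B = u :=
    ⟨_, OrthonormalBasis.coe_mk hu hspan.ge⟩
  have hvx : v ⬝ᵥ x = ∑ i, ⟪v, B i⟫ * ⟪x, B i⟫ := by
    change ⟪x, v⟫ = _
    simp only [← B.sum_inner_mul_inner x v, real_inner_comm v, mul_comm]
  have ha0 : 0 ≤ a := ha ▸ hA.dotProduct_mulVec_nonneg v.ofLp
  rw [dotProduct_sub_smul_vecMulVec_mulVec, dotProduct_mulVec_eq_sum_of_mulVec_eq_smul B heig,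
    hvx, ← B.sum_sq_inner_left, heps]
  exact min_mul_sum_sq_le_sum_mul_sq_sub_sq_sum_mul ha0
    (by rw [B.sum_sq_inner_left, hv, one_pow]) hlmin _

/-- Let `A` be a `d×d` real symmetric positive semidefinite matrix admitting
an orthonormal basis `u₁, …, u_d` of `ℝ^d` consisting of eigenvectors of `A` with eigenvalues
`lam i`, and let `lmin = minᵢ lam i`. Let `v` be a unit vector and `a = vᵀ A v`. With
`ε = ∑_{i : lam i ≤ a/2} ⟨v, uᵢ⟩²`, one has, for every `x`,
`xᵀ (A − (a/5) v vᵀ) x ≥ min{ a/10, lmin − (2a/5)·ε } · ‖x‖²`. -/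
theorem stmt_4 (d : ℕ) (A : Matrix (Fin d) (Fin d) ℝ) (hA : A.PosSemidef)
    (u : Fin d → EuclideanSpace ℝ (Fin d)) (hu : Orthonormal ℝ u)
    (hspan : Submodule.span ℝ (Set.range u) = ⊤)
    (lam : Fin d → ℝ) (heig : ∀ i, A.mulVec (u i) = lam i • u i)
    (lmin : ℝ) (hlmin : ∀ i, lmin ≤ lam i) (hlmin' : ∃ i, lam i = lmin)
    (v : EuclideanSpace ℝ (Fin d)) (hv : ‖v‖ = 1)
    (a : ℝ) (ha : a = dotProduct v (A.mulVec v))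
    (eps : ℝ)
    (heps : eps = ∑ i ∈ Finset.univ.filter fun i => lam i ≤ a / 2, ⟪v, u i⟫ ^ 2) :
    ∀ x : EuclideanSpace ℝ (Fin d),
      min (a / 10) (lmin - (2 * a / 5) * eps) * ‖x‖ ^ 2
        ≤ dotProduct x ((A - (a / 5) • Matrix.vecMulVec v v).mulVec x) :=
  stmt_4_general d A hA u hu hspan lam heig lmin hlmin v hv a ha eps heps
end

section
/- Let f : ℝ^d → ℝ be convex and twice continuously differentiable with L-Lipschitz gradient and H-Lipschitz continuous Hessian, where L, H > 0. Fix x̃ ∈ ℝ^d, γ > 0, and constants 0 < σ_u < σ < 1. Define g(y) = f(x̃) + ⟨∇f(x̃), y − x̃⟩ + ½⟨∇²f(x̃)(y − x̃), y − x̃⟩ + (1/(2γ))‖y − x̃‖² and g* = inf_y g(y). Suppose y ∈ ℝ^d satisfies g(y) − g* ≤ ε_A where ε_A < (σ − σ_u)² / (2γ(Lγ + 1 + (σ − σ_u)²)(L + 1/γ)) · (f(x̃) − g*), and additionally γ‖y − x̃‖ ≤ 2σ_u/H. Then ‖γ∇f(y) + y − x̃‖² ≤ σ²‖y − x̃‖².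 -/
/-!
Write `p = y - xt`, `b = ∇f(xt)`, `A = ∇²f(xt)` and `q w = ⟪b, w⟫ + ½⟪(A + γ⁻¹) w, w⟫`, so that
`g = f xt + q (· - xt)`. As `0 ≤ A ≤ L`, the model `q` is `γ⁻¹`-strongly convex and
`(L + γ⁻¹)`-smooth. Smoothness gives `‖∇q p‖² ≤ 2(L + γ⁻¹)(g y - g*)`, and comparing `p` and `0`
with the exact minimiser of `q` gives `f xt - g* ≤ (L + γ⁻¹)(‖p‖² + 2γ ε_A)`; with the choice of
`ε_A` these yield `γ‖∇q p‖ ≤ (σ - σ_u)‖p‖`. Finally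
`γ∇f(y) + p = γ(∇f(y) - b - A p) + γ∇q p`, and by the Lipschitz Hessian the first term is at most
`γ H/2 ‖p‖² ≤ σ_u‖p‖`.
-/

open scoped RealInnerProductSpace

section QuadraticModel

variable {E : Type*} [NormedAddCommGroup E] [InnerProductSpace ℝ E]

noncomputable def quadraticModel (b : E) (B : E →L[ℝ] E) (w : E) : ℝ := ⟪b, w⟫ + 1 / 2 * ⟪B w, w⟫

variable {b : E} {B : E →L[ℝ] E}

lemma quadraticModel_add (hB : ∀ u v, ⟪B u, v⟫ = ⟪B v, u⟫) (v w : E) :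
    quadraticModel b B (v + w) = quadraticModel b B v + ⟪b + B v, w⟫ + 1 / 2 * ⟪B w, w⟫ := by
  simp only [quadraticModel, map_add, inner_add_left, inner_add_right]
  linear_combination (1 / 2 : ℝ) * hB w v

lemma norm_sq_add_apply_le {M m : ℝ} (hB : ∀ u v, ⟪B u, v⟫ = ⟪B v, u⟫)
    (hM : 0 < M) (hBM : ∀ u, ⟪B u, u⟫ ≤ M * ‖u‖ ^ 2)
    (hm : m ∈ lowerBounds (Set.range (quadraticModel b B))) (v : E) :
    ‖b + B v‖ ^ 2 ≤ 2 * M * (quadraticModel b B v - m) := by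
  set G := b + B v
  have hdescent := hm ⟨v + (-M⁻¹) • G, rfl⟩
  rw [quadraticModel_add hB, map_smul, real_inner_smul_left, real_inner_smul_right,
    real_inner_smul_right, real_inner_self_eq_norm_sq] at hdescent
  have hcurv : M⁻¹ * ⟪B G, G⟫ ≤ ‖G‖ ^ 2 := by
    rw [inv_mul_le_iff₀ hM]; exact hBM G
  have hMinv : 0 < M⁻¹ := inv_pos.2 hM
  have : M⁻¹ * ‖G‖ ^ 2 ≤ 2 * (quadraticModel b B v - m) := by nlinarith
  rwa [inv_mul_le_iff₀ hM, ← mul_assoc, mul_comm M] at this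

lemma exists_add_apply_eq_zero [CompleteSpace E] {μ : ℝ} (hμ : 0 < μ)
    (hBμ : ∀ u, μ * ‖u‖ ^ 2 ≤ ⟪B u, u⟫) : ∃ w, b + B w = 0 := by
  have hcoer : IsCoercive ((innerSL ℝ).comp B) :=
    ⟨μ, hμ, fun u => by simpa [sq, mul_assoc] using hBμ u⟩
  set e := hcoer.continuousLinearEquivOfBilin
  have he : ∀ v, e v = B v := fun v => ext_inner_right ℝ fun w => by simp [e]
  exact ⟨e.symm (-b), by rw [← he, e.apply_symm_apply, add_neg_cancel]⟩

lemma neg_le_of_isGLB_range_quadraticModel [CompleteSpace E] {μ M m : ℝ}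
    (hB : ∀ u v, ⟪B u, v⟫ = ⟪B v, u⟫) (hμ : 0 < μ) (hBμ : ∀ u, μ * ‖u‖ ^ 2 ≤ ⟪B u, u⟫)
    (hM : 0 ≤ M) (hBM : ∀ u, ⟪B u, u⟫ ≤ M * ‖u‖ ^ 2) (hm : IsGLB (Set.range (quadraticModel b B)) m)
    (p : E) : -m ≤ M * ‖p‖ ^ 2 + 2 * M / μ * (quadraticModel b B p - m) := by
  obtain ⟨w, hw⟩ := exists_add_apply_eq_zero (b := b) hμ hBμ
  have hshift (u : E) : quadraticModel b B (w + u) = quadraticModel b B w + 1 / 2 * ⟪B u, u⟫ := by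
    simp [quadraticModel_add hB, hw]
  have hmin : IsLeast (Set.range (quadraticModel b B)) (quadraticModel b B w) := by
    refine ⟨⟨w, rfl⟩, ?_⟩
    rintro _ ⟨z, rfl⟩
    have := hshift (z - w)
    rw [add_sub_cancel] at this
    nlinarith [hBμ (z - w)]
  obtain rfl : m = quadraticModel b B w := hm.unique hmin.isGLB
  have hzero : 0 = quadraticModel b B w + 1 / 2 * ⟪B w, w⟫ := by
    simpa [quadraticModel] using hshift (-w)
  have hp := hshift (p - w)
  rw [add_sub_cancel] at hp
  have hw_le : ‖w‖ ^ 2 ≤ 2 * (‖p‖ ^ 2 + ‖p - w‖ ^ 2) := calc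
    ‖w‖ ^ 2 ≤ (‖p‖ + ‖p - w‖) ^ 2 := by
      gcongr; simpa using norm_sub_le p (p - w)
    _ ≤ 2 * (‖p‖ ^ 2 + ‖p - w‖ ^ 2) := add_sq_le
  have hpw : μ * ‖p - w‖ ^ 2 ≤ 2 * (quadraticModel b B p - quadraticModel b B w) := by
    linarith [hBμ (p - w)]
  have hwM : -quadraticModel b B w ≤ M * (‖p‖ ^ 2 + ‖p - w‖ ^ 2) := by
    nlinarith [hBM w]
  have hpwM : M * ‖p - w‖ ^ 2 ≤ 2 * M / μ * (quadraticModel b B p - quadraticModel b B w) := by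
    rw [div_mul_eq_mul_div, le_div_iff₀ hμ]
    nlinarith
  linarith

lemma norm_add_apply_le_of_sub_le [CompleteSpace E] {μ M m ε r : ℝ} {p : E}
    (hB : ∀ u v, ⟪B u, v⟫ = ⟪B v, u⟫) (hμ : 0 < μ) (hBμ : ∀ u, μ * ‖u‖ ^ 2 ≤ ⟪B u, u⟫)
    (hM : 0 < M) (hBM : ∀ u, ⟪B u, u⟫ ≤ M * ‖u‖ ^ 2)
    (hm : IsGLB (Set.range (quadraticModel b B)) m) (hr : 0 ≤ r)
    (hp : quadraticModel b B p - m ≤ ε) (hε : ε < r ^ 2 / (2 * (M / μ + r ^ 2) * (M / μ)) * -m) :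
    ‖b + B p‖ ≤ μ * r * ‖p‖ := by
  set K := M / μ with hK
  have hKpos : 0 < K := div_pos hM hμ
  have hMK : M = K * μ := by rw [hK, div_mul_cancel₀ _ hμ.ne']
  have hgrad : ‖b + B p‖ ^ 2 ≤ 2 * M * ε := by
    nlinarith [norm_sq_add_apply_le hB hM hBM hm.1 p]
  have hinf : -m ≤ M * ‖p‖ ^ 2 + 2 * K * ε := by
    have := neg_le_of_isGLB_range_quadraticModel hB hμ hBμ hM.le hBM hm p
    rw [mul_div_assoc] at this
    nlinarith
  have hε' : ε * (2 * (K + r ^ 2) * K) < r ^ 2 * -m := by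
    rwa [div_mul_eq_mul_div, lt_div_iff₀ (by positivity)] at hε
  have hkey : 2 * M * ε < (μ * r * ‖p‖) ^ 2 := by
    have : K * (2 * K * ε) < K * (r ^ 2 * μ * ‖p‖ ^ 2) := by
      rw [hMK] at hinf; nlinarith [sq_nonneg r]
    rw [hMK]; nlinarith [lt_of_mul_lt_mul_left this hKpos.le]
  exact (sq_le_sq₀ (norm_nonneg _) (by positivity)).1 (hgrad.trans hkey.le)

lemma inner_add_smul_one_apply_self (A : E →L[ℝ] E) (c : ℝ) (u : E) :
    ⟪(A + c • 1) u, u⟫ = ⟪A u, u⟫ + c * ‖u‖ ^ 2 := by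
  simp [inner_add_left, real_inner_smul_left]

lemma norm_add_apply_add_smul_one_le [CompleteSpace E] {A : E →L[ℝ] E} {L γ m ε r : ℝ} {p : E}
    (hA : ∀ u v, ⟪A u, v⟫ = ⟪A v, u⟫) (hA₀ : ∀ u, 0 ≤ ⟪A u, u⟫) (hAL : ‖A‖ ≤ L) (hγ : 0 < γ)
    (hm : IsGLB (Set.range (quadraticModel b (A + γ⁻¹ • 1))) m) (hr : 0 ≤ r)
    (hp : quadraticModel b (A + γ⁻¹ • 1) p - m ≤ ε)
    (hε : ε < r ^ 2 / (2 * γ * (L * γ + 1 + r ^ 2) * (L + 1 / γ)) * -m) :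
    ‖b + (A + γ⁻¹ • 1) p‖ ≤ γ⁻¹ * r * ‖p‖ := by
  have hL : 0 ≤ L := (norm_nonneg A).trans hAL
  have hsymm (u v : E) : ⟪(A + γ⁻¹ • 1) u, v⟫ = ⟪(A + γ⁻¹ • 1) v, u⟫ := by
    simp [inner_add_left, real_inner_smul_right, hA u v, real_inner_comm]
  have hAM (u : E) : ⟪A u, u⟫ ≤ L * ‖u‖ ^ 2 := calc
    ⟪A u, u⟫ ≤ ‖A u‖ * ‖u‖ := real_inner_le_norm _ _
    _ ≤ ‖A‖ * ‖u‖ * ‖u‖ := by gcongr; exact A.le_opNorm u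
    _ ≤ L * ‖u‖ ^ 2 := by rw [sq, ← mul_assoc]; gcongr
  refine norm_add_apply_le_of_sub_le (M := L + γ⁻¹) hsymm (inv_pos.2 hγ)
    (fun u => by rw [inner_add_smul_one_apply_self]; linarith [hA₀ u])
    (add_pos_of_nonneg_of_pos hL (inv_pos.2 hγ))
    (fun u => by rw [inner_add_smul_one_apply_self, add_mul]; linarith [hAM u]) hm hr hp ?_
  convert hε using 3
  field_simp

end QuadraticModel

lemma norm_sub_sub_fderiv_le_of_lipschitz_fderiv {E F : Type*} [NormedAddCommGroup E]
    [NormedSpace ℝ E] [NormedAddCommGroup F] [NormedSpace ℝ F] {g : E → F} {H : ℝ}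
    (hg : Differentiable ℝ g) (hH : ∀ x y, ‖fderiv ℝ g x - fderiv ℝ g y‖ ≤ H * ‖x - y‖)
    (x y : E) : ‖g y - g x - fderiv ℝ g x (y - x)‖ ≤ H / 2 * ‖y - x‖ ^ 2 := by
  set v := y - x
  set φ : ℝ → F := fun t => g (x + t • v) - g x - t • fderiv ℝ g x v
  have hline (t : ℝ) : HasDerivAt (fun s : ℝ => x + s • v) v t := by
    simpa using ((hasDerivAt_id t).smul_const v).const_add x
  have hφ (t : ℝ) : HasDerivAt φ (fderiv ℝ g (x + t • v) v - fderiv ℝ g x v) t := by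
    have := (hg (x + t • v)).hasFDerivAt.comp_hasDerivAt t (hline t)
    have hlin := (hasDerivAt_id t).smul_const (fderiv ℝ g x v)
    rw [one_smul] at hlin
    exact (this.sub_const (g x)).sub hlin
  have hbound (t : ℝ) (ht : 0 ≤ t) :
      ‖fderiv ℝ g (x + t • v) v - fderiv ℝ g x v‖ ≤ H * ‖v‖ ^ 2 * t := calc
    _ = ‖(fderiv ℝ g (x + t • v) - fderiv ℝ g x) v‖ := rfl
    _ ≤ H * ‖t • v‖ * ‖v‖ := by
      refine ((fderiv ℝ g (x + t • v) - fderiv ℝ g x).le_opNorm v).trans ?_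
      gcongr
      simpa using hH (x + t • v) x
    _ = H * ‖v‖ ^ 2 * t := by rw [norm_smul, Real.norm_of_nonneg ht]; ring
  have hB (t : ℝ) : HasDerivAt (fun s => H / 2 * ‖v‖ ^ 2 * s ^ 2) (H * ‖v‖ ^ 2 * t) t :=
    ((hasDerivAt_pow 2 t).const_mul _).congr_deriv (by ring)
  have := image_norm_le_of_norm_deriv_right_le_deriv_boundary (a := 0) (b := 1)
    (fun t _ => (hφ t).continuousAt.continuousWithinAt) (fun t _ => (hφ t).hasDerivWithinAt)
    (by simp [φ]) hB (fun t ht => hbound t ht.1) (Set.right_mem_Icc.2 zero_le_one)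
  simpa [φ, v] using this

section Gradient

variable {E : Type*} [NormedAddCommGroup E] [InnerProductSpace ℝ E] [CompleteSpace E] {f : E → ℝ}

lemma ContDiff.differentiable_gradient (hf : ContDiff ℝ 2 f) : Differentiable ℝ (gradient f) :=
  (InnerProductSpace.toDual ℝ E).symm.differentiable.comp
    ((hf.fderiv_right (m := 1) (by norm_num)).differentiable one_ne_zero)

lemma inner_fderiv_gradient_apply (x u v : E) :
    ⟪fderiv ℝ (gradient f) x u, v⟫ = fderiv ℝ (fderiv ℝ f) x u v := by
  have : gradient f = (InnerProductSpace.toDual ℝ E).symm ∘ fderiv ℝ f := rfl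
  rw [this, (InnerProductSpace.toDual ℝ E).symm.comp_fderiv]
  exact InnerProductSpace.toDual_symm_apply

lemma ContDiff.inner_fderiv_gradient_comm (hf : ContDiff ℝ 2 f) (x u v : E) :
    ⟪fderiv ℝ (gradient f) x u, v⟫ = ⟪fderiv ℝ (gradient f) x v, u⟫ := by
  rw [inner_fderiv_gradient_apply, inner_fderiv_gradient_apply]
  exact hf.contDiffAt.isSymmSndFDerivAt (by simp) u v

lemma ConvexOn.inner_fderiv_gradient_self_nonneg (hconv : ConvexOn ℝ Set.univ f)
    (hf : ContDiff ℝ 2 f) (x v : E) : 0 ≤ ⟪fderiv ℝ (gradient f) x v, v⟫ := by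
  have hline (t : ℝ) : HasDerivAt (fun s : ℝ => x + s • v) v t := by
    simpa using ((hasDerivAt_id t).smul_const v).const_add x
  have hψ (t : ℝ) : HasDerivAt (fun s => f (x + s • v)) ⟪gradient f (x + t • v), v⟫ t := by
    rw [inner_gradient_left]
    exact ((hf.differentiable two_ne_zero _).hasFDerivAt).comp_hasDerivAt t (hline t)
  have hψconv : ConvexOn ℝ Set.univ fun s : ℝ => f (x + s • v) := by
    simpa [Function.comp_def] using hconv.comp_affineMap
      (AffineMap.const ℝ ℝ x + (LinearMap.toSpanSingleton ℝ E v).toAffineMap)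
  have hmono : Monotone fun t : ℝ => ⟪gradient f (x + t • v), v⟫ := by
    intro s t hst
    have := hψconv.monotoneOn_deriv (fun t _ => (hψ t).differentiableAt) trivial trivial hst
    simpa only [(hψ _).deriv] using this
  have hψ' : HasDerivAt (fun t : ℝ => ⟪gradient f (x + t • v), v⟫)
      ⟪fderiv ℝ (gradient f) x v, v⟫ 0 := by
    have := (hf.differentiable_gradient _).hasFDerivAt.comp_hasDerivAt 0 (hline 0)
    simpa using this.inner ℝ (hasDerivAt_const 0 v)
  exact hψ'.deriv ▸ hmono.deriv_nonneg

end Gradient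

lemma isGLB_range_of_eq_add_comp_sub {E : Type*} [AddGroup E] {g φ : E → ℝ} {c s : ℝ} {x₀ : E}
    (hg : ∀ z, g z = c + φ (z - x₀)) (hs : IsGLB (Set.range g) s) :
    IsGLB (Set.range φ) (s - c) := by
  refine ⟨?_, fun t ht => ?_⟩
  · rintro _ ⟨w, rfl⟩
    have := hs.1 ⟨w + x₀, rfl⟩
    rw [hg, add_sub_cancel_right] at this
    linarith
  · have : t + c ≤ s := hs.2 <| by
      rintro _ ⟨z, rfl⟩
      rw [hg]
      linarith [ht ⟨z - x₀, rfl⟩]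
    linarith

lemma norm_smul_add_le_of_norm_le {E : Type*} [NormedAddCommGroup E] [NormedSpace ℝ E]
    {e r p : E} {γ H σ_u σ : ℝ} (hγ : 0 < γ) (hH : 0 < H) (he : ‖e‖ ≤ H / 2 * ‖p‖ ^ 2)
    (hr : ‖r‖ ≤ γ⁻¹ * (σ - σ_u) * ‖p‖) (hp : γ * ‖p‖ ≤ 2 * σ_u / H) :
    ‖γ • (e + r)‖ ≤ σ * ‖p‖ := calc
  _ ≤ γ * (H / 2 * ‖p‖ ^ 2 + γ⁻¹ * (σ - σ_u) * ‖p‖) := by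
    rw [norm_smul, Real.norm_of_nonneg hγ.le]
    gcongr
    exact (norm_add_le _ _).trans (add_le_add he hr)
  _ = γ * ‖p‖ * (H / 2) * ‖p‖ + (σ - σ_u) * ‖p‖ := by field_simp
  _ ≤ 2 * σ_u / H * (H / 2) * ‖p‖ + (σ - σ_u) * ‖p‖ := by gcongr
  _ = σ * ‖p‖ := by field_simp; ring

theorem stmt_5_general {d : ℕ} (f : EuclideanSpace ℝ (Fin d) → ℝ)
    (hf : ContDiff ℝ 2 f) (hconv : ConvexOn ℝ Set.univ f)
    (L H : ℝ) (hL : 0 < L) (hH : 0 < H)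
    (hgrad : ∀ x y, ‖gradient f x - gradient f y‖ ≤ L * ‖x - y‖)
    (hhess : ∀ x y, ‖fderiv ℝ (gradient f) x - fderiv ℝ (gradient f) y‖ ≤ H * ‖x - y‖)
    (xt : EuclideanSpace ℝ (Fin d)) (γ σ_u σ : ℝ)
    (hγ : 0 < γ) (hσuσ : σ_u < σ)
    (g : EuclideanSpace ℝ (Fin d) → ℝ)
    (hg : ∀ z, g z = f xt + ⟪gradient f xt, z - xt⟫
        + (1 / 2) * ⟪(fderiv ℝ (gradient f) xt) (z - xt), z - xt⟫
        + (1 / (2 * γ)) * ‖z - xt‖ ^ 2)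
    (gstar : ℝ) (hgstar : IsGLB (Set.range g) gstar)
    (y : EuclideanSpace ℝ (Fin d)) (εA : ℝ)
    (hy : g y - gstar ≤ εA)
    (hεA : εA < (σ - σ_u) ^ 2 / (2 * γ * (L * γ + 1 + (σ - σ_u) ^ 2) * (L + 1 / γ))
        * (f xt - gstar))
    (hstep : γ * ‖y - xt‖ ≤ 2 * σ_u / H) :
    ‖γ • gradient f y + (y - xt)‖ ^ 2 ≤ σ ^ 2 * ‖y - xt‖ ^ 2 := by
  set A := fderiv ℝ (gradient f) xt
  have hgq (z) : g z = f xt + quadraticModel (gradient f xt) (A + γ⁻¹ • 1) (z - xt) := by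
    rw [hg, quadraticModel, inner_add_smul_one_apply_self]; ring
  have hAL : ‖A‖ ≤ L := by
    have hlip : LipschitzWith (Real.toNNReal L) (gradient f) :=
      .of_dist_le' fun x y => by simpa only [dist_eq_norm] using hgrad x y
    simpa [Real.coe_toNNReal _ hL.le] using norm_fderiv_le_of_lipschitz ℝ hlip (x₀ := xt)
  have hmodel := norm_add_apply_add_smul_one_le (hf.inner_fderiv_gradient_comm xt)
    (hconv.inner_fderiv_gradient_self_nonneg hf xt) hAL hγ
    (isGLB_range_of_eq_add_comp_sub hgq hgstar) (sub_nonneg.2 hσuσ.le) (p := y - xt) (ε := εA) (by linarith [hgq y]) (by rwa [neg_sub])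
  have htaylor := norm_sub_sub_fderiv_le_of_lipschitz_fderiv hf.differentiable_gradient hhess xt y
  set p := y - xt
  have hsplit : γ • gradient f y + p = γ • ((gradient f y - gradient f xt - A p)
      + (gradient f xt + (A + γ⁻¹ • 1) p)) := by
    rw [add_apply, smul_apply, one_apply_eq_self, smul_add, smul_add, smul_add, smul_smul,
      mul_inv_cancel₀ hγ.ne', one_smul]
    module
  have hnorm : ‖γ • gradient f y + p‖ ≤ σ * ‖p‖ :=
    hsplit ▸ norm_smul_add_le_of_norm_le hγ hH htaylor hmodel hstep
  simpa only [mul_pow] using pow_le_pow_left₀ (norm_nonneg _) hnorm 2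

/-- Let `f : ℝ^d → ℝ` be convex and twice continuously differentiable with
`L`-Lipschitz gradient and `H`-Lipschitz Hessian. Fix `xt`, `γ > 0` and `0 < σ_u < σ < 1`.
Let `g` be the second-order Taylor model of `f` at `xt` plus the proximal term
`(1/(2γ))‖·−xt‖²`, and let `gstar` be its infimum. If `y` satisfies `g y − gstar ≤ εA` with
`εA < (σ−σ_u)²/(2γ(Lγ+1+(σ−σ_u)²)(L+1/γ)) · (f xt − gstar)` and `γ‖y−xt‖ ≤ 2σ_u/H`, then
`‖γ∇f(y) + y − xt‖² ≤ σ²‖y−xt‖²`. -/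
theorem stmt_5 {d : ℕ} (f : EuclideanSpace ℝ (Fin d) → ℝ)
    (hf : ContDiff ℝ 2 f) (hconv : ConvexOn ℝ Set.univ f)
    (L H : ℝ) (hL : 0 < L) (hH : 0 < H)
    (hgrad : ∀ x y, ‖gradient f x - gradient f y‖ ≤ L * ‖x - y‖)
    (hhess : ∀ x y, ‖fderiv ℝ (gradient f) x - fderiv ℝ (gradient f) y‖ ≤ H * ‖x - y‖)
    (xt : EuclideanSpace ℝ (Fin d)) (γ σ_u σ : ℝ)
    (hγ : 0 < γ) (hσu : 0 < σ_u) (hσuσ : σ_u < σ) (hσ1 : σ < 1)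
    (g : EuclideanSpace ℝ (Fin d) → ℝ)
    (hg : ∀ z, g z = f xt + ⟪gradient f xt, z - xt⟫
        + (1 / 2) * ⟪(fderiv ℝ (gradient f) xt) (z - xt), z - xt⟫
        + (1 / (2 * γ)) * ‖z - xt‖ ^ 2)
    (gstar : ℝ) (hgstar : IsGLB (Set.range g) gstar)
    (y : EuclideanSpace ℝ (Fin d)) (εA : ℝ)
    (hy : g y - gstar ≤ εA)
    (hεA : εA < (σ - σ_u) ^ 2 / (2 * γ * (L * γ + 1 + (σ - σ_u) ^ 2) * (L + 1 / γ))
        * (f xt - gstar))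
    (hstep : γ * ‖y - xt‖ ≤ 2 * σ_u / H) :
    ‖γ • gradient f y + (y - xt)‖ ^ 2 ≤ σ ^ 2 * ‖y - xt‖ ^ 2 :=
  stmt_5_general f hf hconv L H hL hH hgrad hhess xt γ σ_u σ hγ hσuσ g hg gstar hgstar y εA hy hεA
    hstep
end

section
/- Let b ∈ ℝ^d, let A be a d×d real symmetric matrix, and let M > 0. Define g(h) = ⟨b, h⟩ + ½ hᵀ A h + (M/6)‖h‖³ for h ∈ ℝ^d. Suppose T ∈ ℝ^d is a global minimizer of g over ℝ^d, set r̄ = ‖T‖, and suppose that the matrix A + (M r̄ / 2)·I is positive semidefinite. Then the function h(y) = ⟨b, y⟩ + ½ yᵀ A y + (M r̄ / 4)‖y‖² is convex on ℝ^d and T is a global minimizer of h over ℝ^d. -/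
/-!
The cubic model `g` and the quadratic model `h` differ by
`φ z = (M/6)‖z‖³ - (M r̄/4)‖z‖²`, whose gradient `(M/2)(‖z‖ - r̄) z` vanishes at `T`.
Since `h z = ⟪b, z⟫ + ½ zᵀ(A + (M r̄/2) I) z` is a convex quadratic, it remains to see that a
convex `h` such that `h + φ` has a local minimum at `T` with `φ'(T) = 0` is minimized at `T`:
on a segment `[T, z]`, convexity bounds the difference quotients of `h` at `T` by
`h z - h T`, while local minimality of `h + φ` and `φ'(T) = 0` make them asymptotically
nonnegative.
-/

open scoped RealInnerProductSpace
open Set Filter Topology Matrix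

theorem hasFDerivAt_norm_rpow_sub_norm_sq {E : Type*} [NormedAddCommGroup E]
    [InnerProductSpace ℝ E] (x : E) {p : ℝ} (hp : 1 < p) :
    HasFDerivAt (fun z : E => ‖z‖ ^ p - p / 2 * ‖x‖ ^ (p - 2) * ‖z‖ ^ 2) (0 : E →L[ℝ] ℝ) x := by
  refine ((hasFDerivAt_norm_rpow x hp).sub
    ((hasStrictFDerivAt_norm_sq x).hasFDerivAt.const_mul (p / 2 * ‖x‖ ^ (p - 2)))).congr_fderiv ?_
  ext v
  simp only [_root_.sub_apply, _root_.smul_apply, coe_innerSL_apply,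
    smul_eq_mul, nsmul_eq_mul, Nat.cast_ofNat, _root_.zero_apply]
  ring

theorem ConvexOn.isMinOn_of_isLocalMinOn_add {E : Type*} [NormedAddCommGroup E] [NormedSpace ℝ E]
    {s : Set E} {f φ : E → ℝ} {x : E} (hf : ConvexOn ℝ s f) (hx : x ∈ s)
    (hφ : HasFDerivAt φ (0 : E →L[ℝ] ℝ) x) (hmin : IsLocalMinOn (f + φ) s x) : IsMinOn f s x := by
  intro z hz
  set ℓ : ℝ → E := ⇑(AffineMap.lineMap (k := ℝ) x z) with hℓ
  have hψ : HasDerivAt (φ ∘ ℓ) 0 0 := by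
    simpa using hφ.comp_hasDerivAt_of_eq (0 : ℝ) AffineMap.hasDerivAt_lineMap (by simp)
  have hseg : ∀ᶠ t in 𝓝[>] (0 : ℝ), t ∈ Ioo 0 1 := Ioo_mem_nhdsGT one_pos
  have hline : Tendsto ℓ (𝓝[>] 0) (𝓝[s] x) := by
    refine tendsto_nhdsWithin_iff.mpr ⟨?_, hseg.mono fun t ht => ?_⟩
    · exact (AffineMap.lineMap_continuous.tendsto' 0 x (by simp)).mono_left nhdsWithin_le_nhds
    · exact hf.1.lineMap_mem hx hz ⟨ht.1.le, ht.2.le⟩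
  have hslope : ∀ᶠ t in 𝓝[>] (0 : ℝ), f x - f z ≤ t⁻¹ • ((φ ∘ ℓ) (0 + t) - (φ ∘ ℓ) 0) := by
    filter_upwards [hseg, hline.eventually hmin] with t ⟨ht0, ht1⟩ hloc
    have hconv := hf.2 hx hz (sub_nonneg.mpr ht1.le) ht0.le (sub_add_cancel 1 t)
    rw [← AffineMap.lineMap_apply_module] at hconv
    simp only [Pi.add_apply, smul_eq_mul, zero_add, Function.comp_apply, hℓ,
      AffineMap.lineMap_apply_zero] at hloc hconv ⊢
    rw [le_inv_mul_iff₀ ht0]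
    nlinarith
  simpa using ge_of_tendsto hψ.tendsto_slope_zero_right hslope

theorem Matrix.PosSemidef.convexOn_dotProduct_mulVec {n : Type*} [Fintype n] {B : Matrix n n ℝ}
    (hB : B.PosSemidef) : ConvexOn ℝ univ (fun x : n → ℝ => x ⬝ᵥ B *ᵥ x) := by
  refine ⟨convex_univ, fun x _ y _ a c ha hc hac => ?_⟩
  have hxy := hB.dotProduct_mulVec_nonneg (x - y)
  simp only [star_trivial, mulVec_sub, dotProduct_sub, sub_dotProduct] at hxy
  simp only [smul_eq_mul, mulVec_add, mulVec_smul, dotProduct_add, add_dotProduct, dotProduct_smul,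
    smul_dotProduct]
  obtain rfl : c = 1 - a := by linarith
  nlinarith [mul_nonneg ha hc]

theorem Matrix.PosSemidef.convexOn_inner_add_dotProduct_mulVec {n : Type*} [Fintype n]
    (b : EuclideanSpace ℝ n) {B : Matrix n n ℝ} (hB : B.PosSemidef) :
    ConvexOn ℝ univ (fun z : EuclideanSpace ℝ n => ⟪b, z⟫ + (1 / 2) * z ⬝ᵥ B *ᵥ z) :=
  ((innerₛₗ ℝ b).convexOn convex_univ).add <|
    (hB.convexOn_dotProduct_mulVec.comp_linearMap (WithLp.linearEquiv 2 ℝ (n → ℝ)).toLinearMap).smul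
      (by norm_num)

theorem EuclideanSpace.norm_sq_eq_dotProduct {n : Type*} [Fintype n] (z : EuclideanSpace ℝ n) :
    ‖z‖ ^ 2 = z ⬝ᵥ z := by
  rw [← real_inner_self_eq_norm_sq, EuclideanSpace.inner_eq_star_dotProduct, star_trivial]

theorem stmt_6_general (d : ℕ) (b : EuclideanSpace ℝ (Fin d))
    (A : Matrix (Fin d) (Fin d) ℝ) (M : ℝ)
    (g : EuclideanSpace ℝ (Fin d) → ℝ)
    (hg : ∀ z, g z = ⟪b, z⟫ + (1 / 2) * dotProduct z (A.mulVec z) + (M / 6) * ‖z‖ ^ 3)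
    (T : EuclideanSpace ℝ (Fin d)) (hT : ∀ z, g T ≤ g z)
    (hpsd : (A + (M * ‖T‖ / 2) • (1 : Matrix (Fin d) (Fin d) ℝ)).PosSemidef)
    (h : EuclideanSpace ℝ (Fin d) → ℝ)
    (hh : ∀ z, h z = ⟪b, z⟫ + (1 / 2) * dotProduct z (A.mulVec z)
        + (M * ‖T‖ / 4) * ‖z‖ ^ 2) :
    ConvexOn ℝ Set.univ h ∧ ∀ z, h T ≤ h z := by
  have hconv : ConvexOn ℝ univ h := by
    convert hpsd.convexOn_inner_add_dotProduct_mulVec b using 2 with z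
    rw [hh, add_mulVec, dotProduct_add, smul_mulVec, one_mulVec, dotProduct_smul, smul_eq_mul,
      ← EuclideanSpace.norm_sq_eq_dotProduct]
    ring
  set φ : EuclideanSpace ℝ (Fin d) → ℝ :=
    fun z => M / 6 * (‖z‖ ^ (3 : ℝ) - 3 / 2 * ‖T‖ ^ ((3 : ℝ) - 2) * ‖z‖ ^ 2)
  have hφ : HasFDerivAt φ (0 : EuclideanSpace ℝ (Fin d) →L[ℝ] ℝ) T := by
    simpa only [smul_zero] using
      (hasFDerivAt_norm_rpow_sub_norm_sq T (by norm_num : (1 : ℝ) < 3)).const_mul (M / 6)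
  have hgh : g = h + φ := by
    ext z
    norm_num [φ, hg, hh]
    ring
  have hmin : IsMinOn (h + φ) univ T := hgh ▸ fun z _ => hT z
  exact ⟨hconv, fun z => hconv.isMinOn_of_isLocalMinOn_add (mem_univ T) hφ hmin.localize
    (mem_univ z)⟩

/-- Let `b ∈ ℝ^d`, `A` a `d×d` real symmetric matrix, `M > 0`, and
`g(h) = ⟨b,h⟩ + ½ hᵀAh + (M/6)‖h‖³`. If `T` is a global minimizer of `g`, `r̄ = ‖T‖`, and
`A + (M r̄/2) I` is positive semidefinite, then `h(y) = ⟨b,y⟩ + ½ yᵀAy + (M r̄/4)‖y‖²` is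
convex on `ℝ^d` and `T` is a global minimizer of `h`. -/
theorem stmt_6 (d : ℕ) (b : EuclideanSpace ℝ (Fin d))
    (A : Matrix (Fin d) (Fin d) ℝ) (hA : A.IsSymm) (M : ℝ) (hM : 0 < M)
    (g : EuclideanSpace ℝ (Fin d) → ℝ)
    (hg : ∀ z, g z = ⟪b, z⟫ + (1 / 2) * dotProduct z (A.mulVec z) + (M / 6) * ‖z‖ ^ 3)
    (T : EuclideanSpace ℝ (Fin d)) (hT : ∀ z, g T ≤ g z)
    (hpsd : (A + (M * ‖T‖ / 2) • (1 : Matrix (Fin d) (Fin d) ℝ)).PosSemidef)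
    (h : EuclideanSpace ℝ (Fin d) → ℝ)
    (hh : ∀ z, h z = ⟪b, z⟫ + (1 / 2) * dotProduct z (A.mulVec z)
        + (M * ‖T‖ / 4) * ‖z‖ ^ 2) :
    ConvexOn ℝ Set.univ h ∧ ∀ z, h T ≤ h z :=
  stmt_6_general d b A M g hg T hT hpsd h hh
end

section
/- Let b ∈ ℝ^d with b ≠ 0, let A be a d×d real symmetric matrix, and for M > 0 define g_M(h) = ⟨b, h⟩ + ½ hᵀ A h + (M/6)‖h‖³ for h ∈ ℝ^d. Let M₁ ≥ M₂ > 0 and let T₁ and T₂ be global minimizers over ℝ^d of g_{M₁} and g_{M₂} respectively. Then ‖T₁‖ ≤ ‖T₂‖. -/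
/-!
A global minimizer `T` of the cubic model is stationary, `B T + (M‖T‖/2) T = -b` as functionals,
and for `T ≠ 0` the form `Q v = B v v + (M‖T‖/2)‖v‖²` is positive semidefinite: on the sphere
of radius `‖T‖` the model exceeds its minimum by exactly `Q (z - T) / 2`, and the directions
`z - T` are, up to scaling, all `w` with `⟪T, w⟫ ≠ 0`, a dense set.

Subtracting the stationarity equations of `T₁` (for `M₁`) and `T₂` (for `M₂`) gives
`Q (T₁ - T₂) = (M₂‖T₂‖ - M₁‖T₁‖)/2 ⟪T₁, T₁ - T₂⟫` for the form `Q` of `T₂`, and the right-hand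
side is negative as soon as `‖T₁‖ > ‖T₂‖`. The minimizer `T₂` is nonzero because stationarity
at `0` would force `b = 0`.
-/

open scoped RealInnerProductSpace

section CubicModel

variable {E : Type*} [NormedAddCommGroup E] [InnerProductSpace ℝ E]
  {b : E} {B : LinearMap.BilinForm ℝ E} {M : ℝ}

variable (b B M) in
noncomputable def cubicModel (z : E) : ℝ :=
  ⟪b, z⟫ + 1 / 2 * B z z + M / 6 * ‖z‖ ^ 3

theorem LinearMap.BilinForm.IsSymm.apply_add_smul_self (hB : B.IsSymm) (x u : E) (t : ℝ) :
    B (x + t • u) (x + t • u) = B x x + 2 * t * B u x + t ^ 2 * B u u := by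
  simp only [map_add, map_smul, LinearMap.add_apply, LinearMap.smul_apply, smul_eq_mul,
    hB.eq x u]
  ring

theorem hasDerivAt_cubicModel_line (hB : B.IsSymm) (T u : E) :
    HasDerivAt (fun t : ℝ ↦ cubicModel b B M (T + t • u))
      (⟪b, u⟫ + B u T + M * ‖T‖ / 2 * ⟪T, u⟫) 0 := by
  have hline : HasDerivAt (fun t : ℝ ↦ T + t • u) u 0 := by
    simpa using ((hasDerivAt_id (0 : ℝ)).smul_const u).const_add T
  have hcube : HasDerivAt (fun t : ℝ ↦ ‖T + t • u‖ ^ (3 : ℝ)) (3 * ‖T‖ * ⟪T, u⟫) 0 := by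
    have := (hasFDerivAt_norm_rpow (T + (0 : ℝ) • u) (p := 3) (by norm_num)).comp_hasDerivAt
      (0 : ℝ) hline
    refine this.congr_deriv ?_
    norm_num
  have hpoly : HasDerivAt
      (fun t : ℝ ↦ ⟪b, T⟫ + 1 / 2 * B T T + t * (⟪b, u⟫ + B u T) + t ^ 2 * (1 / 2 * B u u))
      (⟪b, u⟫ + B u T) 0 := by
    have := (((hasDerivAt_id' (0 : ℝ)).mul_const (⟪b, u⟫ + B u T)).const_add
      (⟪b, T⟫ + 1 / 2 * B T T)).add ((hasDerivAt_pow 2 (0 : ℝ)).mul_const (1 / 2 * B u u))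
    exact this.congr_deriv (by simp)
  have hfun : (fun t : ℝ ↦ cubicModel b B M (T + t • u)) = fun t ↦
      ⟪b, T⟫ + 1 / 2 * B T T + t * (⟪b, u⟫ + B u T) + t ^ 2 * (1 / 2 * B u u)
        + M / 6 * ‖T + t • u‖ ^ (3 : ℝ) := by
    funext t
    simp only [cubicModel, hB.apply_add_smul_self, inner_add_right, real_inner_smul_right]
    norm_cast
    ring
  rw [hfun]
  exact (hpoly.add (hcube.const_mul (M / 6))).congr_deriv (by ring)

theorem cubicModel_stationary_of_isLocalMin (hB : B.IsSymm) {T : E}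
    (hT : IsLocalMin (cubicModel b B M) T) (u : E) :
    ⟪b, u⟫ + B u T + M * ‖T‖ / 2 * ⟪T, u⟫ = 0 := by
  refine IsLocalMin.hasDerivAt_eq_zero ?_ (hasDerivAt_cubicModel_line hB T u)
  have hT' : IsLocalMin (cubicModel b B M) (T + (0 : ℝ) • u) := by simpa using hT
  exact hT'.comp_continuous (g := fun t : ℝ ↦ T + t • u) (by fun_prop)

theorem ne_zero_of_isLocalMin_cubicModel (hB : B.IsSymm) (hb : b ≠ 0) {T : E}
    (hT : IsLocalMin (cubicModel b B M) T) : T ≠ 0 := by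
  rintro rfl
  exact hb (by simpa using cubicModel_stationary_of_isLocalMin hB hT b)

theorem cubicModel_sub_eq_of_norm_eq (hB : B.IsSymm) {T z : E}
    (hT : ∀ u, ⟪b, u⟫ + B u T + M * ‖T‖ / 2 * ⟪T, u⟫ = 0) (hz : ‖z‖ = ‖T‖) :
    cubicModel b B M z - cubicModel b B M T =
      1 / 2 * (B (z - T) (z - T) + M * ‖T‖ / 2 * ‖z - T‖ ^ 2) := by
  have hquad := hB.apply_add_smul_self T (z - T) 1
  rw [one_smul, add_sub_cancel] at hquad
  have hnorm : ‖z - T‖ ^ 2 = ‖z‖ ^ 2 - 2 * ⟪T, z⟫ + ‖T‖ ^ 2 := by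
    rw [norm_sub_sq_real, real_inner_comm]
  have hstat := hT (z - T)
  rw [inner_sub_right, inner_sub_right, real_inner_self_eq_norm_sq] at hstat
  simp only [cubicModel, hquad, hnorm, hz]
  linear_combination hstat

theorem apply_self_add_mul_norm_sq_nonneg_of_inner_ne_zero (hB : B.IsSymm) {T : E}
    (hT : ∀ z, cubicModel b B M T ≤ cubicModel b B M z) {w : E} (hw : ⟪T, w⟫ ≠ 0) :
    0 ≤ B w w + M * ‖T‖ / 2 * ‖w‖ ^ 2 := by
  have hstat := cubicModel_stationary_of_isLocalMin hB (Filter.Eventually.of_forall hT)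
  have hw0 : ‖w‖ ^ 2 ≠ 0 := by
    rintro h
    simp_all
  -- moving from `T` by `t • w` lands back on the sphere of radius `‖T‖`
  set t := -2 * ⟪T, w⟫ / ‖w‖ ^ 2 with ht
  have ht0 : t ≠ 0 := div_ne_zero (by simpa using hw) hw0
  have hsphere : ‖T + t • w‖ = ‖T‖ := by
    rw [← sq_eq_sq₀ (norm_nonneg _) (norm_nonneg _), norm_add_sq_real, real_inner_smul_right,
      norm_smul, mul_pow, Real.norm_eq_abs, sq_abs, ht]
    field_simp
    ring
  have hgain := cubicModel_sub_eq_of_norm_eq hB hstat hsphere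
  simp only [add_sub_cancel_left, map_smul, LinearMap.smul_apply, smul_eq_mul, norm_smul,
    Real.norm_eq_abs, mul_pow, sq_abs] at hgain
  have hle := sub_nonneg.2 (hT (T + t • w))
  rw [hgain] at hle
  refine (mul_nonneg_iff_of_pos_left (pow_pos (abs_pos.2 ht0) 2)).1 ?_
  rw [sq_abs]
  linarith

theorem apply_self_add_mul_norm_sq_nonneg_of_forall_cubicModel_le (hB : B.IsSymm) {T : E}
    (hT : ∀ z, cubicModel b B M T ≤ cubicModel b B M z) (hT0 : T ≠ 0) (v : E) :
    0 ≤ B v v + M * ‖T‖ / 2 * ‖v‖ ^ 2 := by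
  obtain hv | hv := ne_or_eq ⟪T, v⟫ 0
  · exact apply_self_add_mul_norm_sq_nonneg_of_inner_ne_zero hB hT hv
  set c := M * ‖T‖ / 2
  -- along `v + ε • T`, transversal for `ε ≠ 0`, the form is a polynomial in `ε`
  have hexp : ∀ ε : ℝ, B (v + ε • T) (v + ε • T) + c * ‖v + ε • T‖ ^ 2 =
      (B v v + c * ‖v‖ ^ 2) + ε * (2 * B T v) + ε ^ 2 * (B T T + c * ‖T‖ ^ 2) := by
    intro ε
    rw [hB.apply_add_smul_self, norm_add_sq_real, real_inner_smul_right, real_inner_comm, hv,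
      norm_smul, mul_pow, Real.norm_eq_abs, sq_abs]
    ring
  have hnonneg : ∀ ε : ℝ, ε ≠ 0 →
      0 ≤ (B v v + c * ‖v‖ ^ 2) + ε * (2 * B T v) + ε ^ 2 * (B T T + c * ‖T‖ ^ 2) := by
    intro ε hε
    rw [← hexp]
    refine apply_self_add_mul_norm_sq_nonneg_of_inner_ne_zero hB hT ?_
    simp [inner_add_right, real_inner_smul_right, hv, hε, hT0]
  have hcont : Continuous fun ε : ℝ ↦
      (B v v + c * ‖v‖ ^ 2) + ε * (2 * B T v) + ε ^ 2 * (B T T + c * ‖T‖ ^ 2) := by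
    fun_prop
  refine ge_of_tendsto ?_ (eventually_nhdsWithin_of_forall (a := (0 : ℝ)) (s := {0}ᶜ) hnonneg)
  simpa using (hcont.tendsto 0).mono_left (nhdsWithin_le_nhds (s := {0}ᶜ))

theorem apply_sub_add_mul_norm_sq_eq_of_stationary {M₁ M₂ : ℝ} {T₁ T₂ : E}
    (h₁ : ∀ u, ⟪b, u⟫ + B u T₁ + M₁ * ‖T₁‖ / 2 * ⟪T₁, u⟫ = 0)
    (h₂ : ∀ u, ⟪b, u⟫ + B u T₂ + M₂ * ‖T₂‖ / 2 * ⟪T₂, u⟫ = 0) :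
    B (T₁ - T₂) (T₁ - T₂) + M₂ * ‖T₂‖ / 2 * ‖T₁ - T₂‖ ^ 2 =
      (M₂ * ‖T₂‖ - M₁ * ‖T₁‖) / 2 * ⟪T₁, T₁ - T₂⟫ := by
  rw [← real_inner_self_eq_norm_sq, map_sub, inner_sub_left]
  linear_combination h₁ (T₁ - T₂) - h₂ (T₁ - T₂)

theorem norm_le_norm_of_forall_cubicModel_le (hB : B.IsSymm) (hb : b ≠ 0) {M₁ M₂ : ℝ}
    (hM₂ : 0 < M₂) (hM : M₂ ≤ M₁) {T₁ T₂ : E}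
    (hT₁ : ∀ z, cubicModel b B M₁ T₁ ≤ cubicModel b B M₁ z)
    (hT₂ : ∀ z, cubicModel b B M₂ T₂ ≤ cubicModel b B M₂ z) : ‖T₁‖ ≤ ‖T₂‖ := by
  have hT₂0 := ne_zero_of_isLocalMin_cubicModel hB hb (Filter.Eventually.of_forall hT₂)
  have hsecond := apply_self_add_mul_norm_sq_nonneg_of_forall_cubicModel_le hB hT₂ hT₂0 (T₁ - T₂)
  rw [apply_sub_add_mul_norm_sq_eq_of_stationary
    (cubicModel_stationary_of_isLocalMin hB (Filter.Eventually.of_forall hT₁))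
    (cubicModel_stationary_of_isLocalMin hB (Filter.Eventually.of_forall hT₂))] at hsecond
  by_contra! hlt
  have hM_norm : M₂ * ‖T₂‖ < M₁ * ‖T₁‖ := by
    nlinarith [norm_nonneg T₂]
  have hinner : 0 < ⟪T₁, T₁ - T₂⟫ := by
    rw [inner_sub_right, real_inner_self_eq_norm_sq]
    nlinarith [real_inner_le_norm T₁ T₂, norm_nonneg T₂]
  nlinarith

end CubicModel

/-- Let `b ∈ ℝ^d` with `b ≠ 0`, `A` a `d×d` real symmetric matrix, and for
`M > 0` let `g_M(h) = ⟨b,h⟩ + ½ hᵀAh + (M/6)‖h‖³`. If `M₁ ≥ M₂ > 0` and `T₁, T₂` are global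
minimizers of `g_{M₁}` and `g_{M₂}` respectively, then `‖T₁‖ ≤ ‖T₂‖`. -/
theorem stmt_7 (d : ℕ) (b : EuclideanSpace ℝ (Fin d)) (hb : b ≠ 0)
    (A : Matrix (Fin d) (Fin d) ℝ) (hA : A.IsSymm)
    (M₁ M₂ : ℝ) (hM₂ : 0 < M₂) (hM : M₂ ≤ M₁)
    (g : ℝ → EuclideanSpace ℝ (Fin d) → ℝ)
    (hg : ∀ M z, g M z = ⟪b, z⟫ + (1 / 2) * dotProduct z (A.mulVec z)
        + (M / 6) * ‖z‖ ^ 3)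
    (T₁ T₂ : EuclideanSpace ℝ (Fin d))
    (hT₁ : ∀ z, g M₁ T₁ ≤ g M₁ z) (hT₂ : ∀ z, g M₂ T₂ ≤ g M₂ z) :
    ‖T₁‖ ≤ ‖T₂‖ := by
  let L := (WithLp.linearEquiv 2 ℝ (Fin d → ℝ)).toLinearMap
  let B := (Matrix.toBilin' A).comp L L
  have hB : B.IsSymm := ⟨fun x y ↦ (Matrix.isSymm_toBilin'_iff_isSymm.2 hA).eq (L x) (L y)⟩
  have hgB : g = cubicModel b B := by
    funext M z
    simp [hg, cubicModel, B, L, Matrix.toBilin'_apply']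
  subst hgB
  exact norm_le_norm_of_forall_cubicModel_le hB hb hM₂ hM hT₁ hT₂
end

section
/- Let M be a d×d real symmetric positive semidefinite matrix whose largest eigenvalue λ₁ equals its spectral norm ‖M‖, let u ∈ ℝ^d be a unit vector with M u = λ₁ u, and let P be a d×d real matrix that is an orthogonal projection (P = Pᵀ and P² = P). If ‖u − Pu‖ ≤ δ for some δ ≥ 0, then uᵀ P M P u ≥ λ₁ (1 − δ − δ²). -/
/-!
Put `w = u - P u`. Since `P` is an orthogonal projection, `w ⟂ P u`, so `⟪w, u⟫ = ‖w‖²`, which is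
at most both `δ` and `δ²`. As `uᵀ P M P u = (u - w)ᵀ M (u - w)` and `M u = λ₁ u`, expanding gives
`λ₁ (1 - 2 ⟪w, u⟫) + wᵀ M w`; the last term is nonnegative, and so is `λ₁ = uᵀ M u`.
-/

open scoped InnerProductSpace

namespace LinearMap

namespace IsSymmetricProjection

variable {𝕜 E : Type*} [RCLike 𝕜] [NormedAddCommGroup E] [InnerProductSpace 𝕜 E]
  {P : E →ₗ[𝕜] E}

theorem inner_sub_apply_apply (hP : P.IsSymmetricProjection) (x : E) :
    ⟪x - P x, P x⟫_𝕜 = 0 := by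
  rw [inner_sub_left, hP.isSymmetric x (P x), ← Module.End.mul_apply, hP.isIdempotentElem.eq,
    sub_self]

theorem inner_sub_apply_self (hP : P.IsSymmetricProjection) (x : E) :
    ⟪x - P x, x⟫_𝕜 = (‖x - P x‖ ^ 2 : 𝕜) := by
  have h := inner_add_right (𝕜 := 𝕜) (x - P x) (x - P x) (P x)
  rwa [sub_add_cancel, hP.inner_sub_apply_apply, add_zero, inner_self_eq_norm_sq_to_K] at h

end IsSymmetricProjection

variable {E : Type*} [NormedAddCommGroup E] [InnerProductSpace ℝ E]

theorem IsSymmetric.inner_sub_apply_sub_of_apply_eq_smul {T : E →ₗ[ℝ] E} (hT : T.IsSymmetric)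
    {u : E} {μ : ℝ} (hu : T u = μ • u) (w : E) :
    ⟪u - w, T (u - w)⟫_ℝ = μ * (‖u‖ ^ 2 - 2 * ⟪w, u⟫_ℝ) + ⟪w, T w⟫_ℝ := by
  have huTw : ⟪u, T w⟫_ℝ = μ * ⟪w, u⟫_ℝ := by
    rw [← hT, hu, real_inner_smul_left, real_inner_comm]
  rw [map_sub, hu]
  simp only [inner_sub_left, inner_sub_right, real_inner_smul_right, real_inner_self_eq_norm_sq,
    huTw]
  ring

theorem IsPositive.le_inner_projection_conj_apply {T P : E →ₗ[ℝ] E} (hT : T.IsPositive)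
    (hP : P.IsSymmetricProjection) {u : E} (hu : ‖u‖ = 1) {μ : ℝ} (heig : T u = μ • u)
    {δ : ℝ} (hδ : ‖u - P u‖ ≤ δ) :
    μ * (1 - δ - δ ^ 2) ≤ ⟪u, P (T (P u))⟫_ℝ := by
  set w := u - P u
  have hμ : 0 ≤ μ := by
    simpa [heig, real_inner_smul_left, real_inner_self_eq_norm_sq, hu] using hT.inner_nonneg_left u
  have hw : ⟪w, u⟫_ℝ = ‖w‖ ^ 2 := hP.inner_sub_apply_self u
  have hw_le : ⟪w, u⟫_ℝ ≤ δ := (real_inner_le_norm w u).trans (by rwa [hu, mul_one])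
  have hw_le_sq : ⟪w, u⟫_ℝ ≤ δ ^ 2 := hw ▸ pow_le_pow_left₀ (norm_nonneg w) hδ 2
  have hTw : 0 ≤ ⟪w, T w⟫_ℝ := hT.inner_nonneg_right w
  calc μ * (1 - δ - δ ^ 2) ≤ μ * (‖u‖ ^ 2 - 2 * ⟪w, u⟫_ℝ) + ⟪w, T w⟫_ℝ := by
        rw [hu]; nlinarith
    _ = ⟪P u, T (P u)⟫_ℝ := by
        rw [← hT.isSymmetric.inner_sub_apply_sub_of_apply_eq_smul heig, sub_sub_cancel]
    _ = ⟪u, P (T (P u))⟫_ℝ := hP.isSymmetric _ _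

end LinearMap

theorem Matrix.isSymmetricProjection_toEuclideanLin {𝕜 n : Type*} [RCLike 𝕜] [Fintype n]
    [DecidableEq n] {P : Matrix n n 𝕜} (hP : P.IsHermitian) (hP2 : IsIdempotentElem P) :
    P.toEuclideanLin.IsSymmetricProjection where
  isIdempotentElem := by
    rw [IsIdempotentElem, Module.End.mul_eq_comp, ← Matrix.toLpLin_mul_same, hP2.eq]
  isSymmetric := Matrix.isSymmetric_toEuclideanLin_iff.mpr hP

theorem stmt_9_general (d : ℕ) (M : Matrix (Fin d) (Fin d) ℝ) (hM : M.PosSemidef)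
    (lam₁ : ℝ)
    (u : EuclideanSpace ℝ (Fin d)) (hu : ‖u‖ = 1) (heig : M.mulVec u = lam₁ • u)
    (P : Matrix (Fin d) (Fin d) ℝ) (hP : P.IsSymm) (hP2 : P * P = P)
    (δ : ℝ) (hproj : ‖u - (EuclideanSpace.equiv (Fin d) ℝ).symm (P.mulVec u)‖ ≤ δ) :
    lam₁ * (1 - δ - δ ^ 2) ≤ dotProduct u ((P * M * P).mulVec u) := by
  have hQ : P.toEuclideanLin.IsSymmetricProjection :=
    Matrix.isSymmetricProjection_toEuclideanLin (Matrix.isHermitian_iff_isSymm.mpr hP) hP2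
  have hTu : M.toEuclideanLin u = lam₁ • u := by
    ext i
    simp [heig]
  convert (Matrix.isPositive_toEuclideanLin_iff.mpr hM).le_inner_projection_conj_apply hQ hu hTu
    hproj using 1
  simp [EuclideanSpace.inner_eq_star_dotProduct, Matrix.mulVec_mulVec, dotProduct_comm, mul_assoc]

/-- Let `M` be a `d×d` real symmetric positive semidefinite matrix whose
largest eigenvalue `lam₁` equals its spectral norm, let `u` be a unit vector with
`M u = lam₁ u`, and let `P` be an orthogonal projection matrix (`P = Pᵀ`, `P² = P`). If
`‖u − Pu‖ ≤ δ` for some `δ ≥ 0`, then `uᵀ P M P u ≥ lam₁ (1 − δ − δ²)`. -/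
theorem stmt_9 (d : ℕ) (M : Matrix (Fin d) (Fin d) ℝ) (hM : M.PosSemidef)
    (lam₁ : ℝ) (hnorm : lam₁ = ‖Matrix.toEuclideanCLM (𝕜 := ℝ) M‖)
    (u : EuclideanSpace ℝ (Fin d)) (hu : ‖u‖ = 1) (heig : M.mulVec u = lam₁ • u)
    (P : Matrix (Fin d) (Fin d) ℝ) (hP : P.IsSymm) (hP2 : P * P = P)
    (δ : ℝ) (hδ : 0 ≤ δ) (hproj : ‖u - (EuclideanSpace.equiv (Fin d) ℝ).symm (P.mulVec u)‖ ≤ δ) :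
    lam₁ * (1 - δ - δ ^ 2) ≤ dotProduct u ((P * M * P).mulVec u) :=
  stmt_9_general d M hM lam₁ u hu heig P hP hP2 δ hproj
end

section
/- Let A be a d×d real symmetric positive semidefinite matrix whose eigenvalues, listed with multiplicity in nonincreasing order, are λ₁ ≥ λ₂ ≥ … ≥ λ_d, let μ > 0 with λ_d ≥ μ, and let α > 0 and τ > 0 satisfy Σᵢ₌₁^d λᵢ^α ≤ τ^α. If τ^{α/(1+2α)} · μ^{−α/(1+2α)} ≤ d, then there exists k ∈ {1, …, d} such that k + √(λ_k / μ) ≤ 2 · τ^{α/(1+2α)} · μ^{−α/(1+2α)} + 1. -/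
/-!
Put `T = (τ/μ)^{α/(1+2α)}` and `k = ⌈T⌉`. Since the `λᵢ` decrease,
`k λ_k^α ≤ ∑ᵢ λᵢ^α ≤ τ^α`, and the exponent is chosen so that `τ^α = T (μ T²)^α`;
hence `λ_k ≤ μ T²`, i.e. `√(λ_k/μ) ≤ T`, while `k ≤ T + 1`.
-/

open Finset

theorem Antitone.card_Iic_nsmul_le_sum {ι M : Type*} [Fintype ι] [Preorder ι]
    [LocallyFiniteOrderBot ι] [AddCommMonoid M] [PartialOrder M] [IsOrderedAddMonoid M]
    {f : ι → M} (hf : Antitone f) (hf0 : ∀ i, 0 ≤ f i) (k : ι) :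
    #(Iic k) • f k ≤ ∑ i, f i :=
  calc #(Iic k) • f k ≤ ∑ i ∈ Iic k, f i :=
        card_nsmul_le_sum _ _ _ fun _ hi ↦ hf (mem_Iic.mp hi)
    _ ≤ ∑ i, f i := sum_le_sum_of_subset_of_nonneg (subset_univ _) fun i _ _ ↦ hf0 i

namespace Real

theorem rpow_eq_mul_mul_sq_rpow {μ τ α : ℝ} (hμ : 0 < μ) (hτ : 0 < τ) (hα : 0 < α) :
    τ ^ α =
      (τ / μ) ^ (α / (1 + 2 * α)) * (μ * ((τ / μ) ^ (α / (1 + 2 * α))) ^ 2) ^ α := by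
  have hx : 0 < τ / μ := div_pos hτ hμ
  have hexp : α / (1 + 2 * α) + α / (1 + 2 * α) * 2 * α = α := by
    field_simp
  rw [mul_rpow hμ.le (by positivity), ← rpow_natCast, ← rpow_mul hx.le, ← rpow_mul hx.le,
    mul_left_comm, ← rpow_add hx, Nat.cast_ofNat, hexp, ← mul_rpow hμ.le hx.le,
    mul_div_cancel₀ _ hμ.ne']

theorem sqrt_div_le_of_mul_rpow_le {l μ τ α T : ℝ} (hl : 0 ≤ l) (hμ : 0 < μ) (hα : 0 < α)
    (hT : 0 < T) (hτ : τ ^ α = T * (μ * T ^ 2) ^ α) (h : T * l ^ α ≤ τ ^ α) :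
    √(l / μ) ≤ T := by
  rw [hτ, mul_le_mul_iff_right₀ hT, rpow_le_rpow_iff hl (by positivity) hα] at h
  rw [sqrt_le_left hT.le, div_le_iff₀ hμ, mul_comm]
  exact h

end Real

theorem stmt_12_general (d : ℕ)
    (lam : Fin d → ℝ)
    (hsort : Antitone lam)
    (μ : ℝ) (hμ : 0 < μ) (hμle : ∀ i, μ ≤ lam i)
    (α τ : ℝ) (hα : 0 < α) (hτ : 0 < τ)
    (hdeg : ∑ i, lam i ^ α ≤ τ ^ α)
    (hd : τ ^ (α / (1 + 2 * α)) * μ ^ (-(α / (1 + 2 * α))) ≤ (d : ℝ)) :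
    ∃ k : Fin d, ((k : ℕ) + 1 : ℝ) + Real.sqrt (lam k / μ)
      ≤ 2 * τ ^ (α / (1 + 2 * α)) * μ ^ (-(α / (1 + 2 * α))) + 1 := by
  have hT_eq : τ ^ (α / (1 + 2 * α)) * μ ^ (-(α / (1 + 2 * α)))
      = (τ / μ) ^ (α / (1 + 2 * α)) := by
    rw [Real.rpow_neg hμ.le, ← div_eq_mul_inv, Real.div_rpow hτ.le hμ.le]
  rw [mul_assoc, hT_eq]
  rw [hT_eq] at hd
  set T := (τ / μ) ^ (α / (1 + 2 * α))
  have hT : 0 < T := by positivity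
  have hk : 1 ≤ ⌈T⌉₊ := Nat.one_le_ceil_iff.mpr hT
  have hkd : ⌈T⌉₊ ≤ d := Nat.ceil_le.mpr hd
  let k : Fin d := ⟨⌈T⌉₊ - 1, by omega⟩
  have hk_cast : ((k : ℕ) + 1 : ℝ) = ⌈T⌉₊ := by
    rw [← Nat.cast_add_one, Nat.sub_add_cancel hk]
  have hlam0 : ∀ i, 0 ≤ lam i := fun i ↦ hμ.le.trans (hμle i)
  have hpow_anti : Antitone fun i ↦ lam i ^ α := fun i j hij ↦
    Real.rpow_le_rpow (hlam0 j) (hsort hij) hα.le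
  have hsum := hpow_anti.card_Iic_nsmul_le_sum (fun i ↦ Real.rpow_nonneg (hlam0 i) α) k
  rw [Fin.card_Iic, nsmul_eq_mul, Nat.cast_add_one, hk_cast] at hsum
  have hTk : T * lam k ^ α ≤ τ ^ α :=
    (mul_le_mul_of_nonneg_right (Nat.le_ceil T) (Real.rpow_nonneg (hlam0 k) α)).trans
      (hsum.trans hdeg)
  have hsqrt : √(lam k / μ) ≤ T :=
    Real.sqrt_div_le_of_mul_rpow_le (hlam0 k) hμ hα hT (Real.rpow_eq_mul_mul_sq_rpow hμ hτ hα) hTk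
  refine ⟨k, ?_⟩
  linarith [Nat.ceil_lt_add_one hT.le]

/-- Let `A` be a `d×d` real symmetric positive semidefinite matrix whose
eigenvalues, listed with multiplicity in nonincreasing order, are `lam 0 ≥ … ≥ lam (d-1)`,
with `lam i ≥ μ > 0`, and let `α > 0`, `τ > 0` satisfy `∑ᵢ (lam i)^α ≤ τ^α`. If
`τ^{α/(1+2α)} μ^{−α/(1+2α)} ≤ d`, then there exists `k` (1-based index `k+1`) with
`(k+1) + √(lam k / μ) ≤ 2 τ^{α/(1+2α)} μ^{−α/(1+2α)} + 1`. -/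
theorem stmt_12 (d : ℕ) (A : Matrix (Fin d) (Fin d) ℝ) (hA : A.PosSemidef)
    (lam : Fin d → ℝ)
    (hperm : ∃ σ : Equiv.Perm (Fin d), lam = hA.1.eigenvalues ∘ σ)
    (hsort : Antitone lam)
    (μ : ℝ) (hμ : 0 < μ) (hμle : ∀ i, μ ≤ lam i)
    (α τ : ℝ) (hα : 0 < α) (hτ : 0 < τ)
    (hdeg : ∑ i, lam i ^ α ≤ τ ^ α)
    (hd : τ ^ (α / (1 + 2 * α)) * μ ^ (-(α / (1 + 2 * α))) ≤ (d : ℝ)) :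
    ∃ k : Fin d, ((k : ℕ) + 1 : ℝ) + Real.sqrt (lam k / μ)
      ≤ 2 * τ ^ (α / (1 + 2 * α)) * μ ^ (-(α / (1 + 2 * α))) + 1 :=
  stmt_12_general d lam hsort μ hμ hμle α τ hα hτ hdeg hd
end

section
/- Let A be a d×d real symmetric matrix with smallest eigenvalue λ_min(A), let H, ε, c₁, c₂ > 0, and let λ ∈ ℝ satisfy |λ − λ_min(A)| ≤ (c₁/2)·√(εH). If r ∈ ℝ satisfies r ≥ max{0, −2λ/H} + (5c₁ + 2c₂)·√(ε/H), then A + (Hr/2)·I − (2c₁ + c₂)·√(εH)·I is positive semidefinite; in particular A + (Hr/2)·I ⪰ c₂·√(εH)·I. -/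
/-!
`A - c • 1` is positive semidefinite once `c` lies below every eigenvalue of `A`, so everything
reduces to the scalar estimate `(2c₁ + c₂)√(εH) ≤ λ_min + Hr/2`. It follows from
`max 0 (-2λ/H) ≥ -2λ/H`, `H√(ε/H) = √(εH)` and `λ_min ≥ λ - (c₁/2)√(εH)`; the same eigenvalue
estimate forces `c₁√(εH) ≥ 0`, which gives the weaker bound with `c₂` alone.
-/

open scoped ComplexOrder MatrixOrder Matrix.Norms.L2Operator in
theorem Matrix.IsHermitian.posSemidef_sub_smul_one {n 𝕜 : Type*} [Fintype n] [DecidableEq n]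
    [RCLike 𝕜] {A : Matrix n n 𝕜} (hA : A.IsHermitian) {c : ℝ}
    (hc : ∀ i, c ≤ hA.eigenvalues i) : (A - c • (1 : Matrix n n 𝕜)).PosSemidef := by
  rw [← Matrix.nonneg_iff_posSemidef, sub_nonneg, ← Algebra.algebraMap_eq_smul_one,
    algebraMap_le_iff_le_spectrum hA.isSelfAdjoint, hA.spectrum_real_eq_range_eigenvalues]
  rintro _ ⟨i, rfl⟩
  exact hc i

theorem Real.mul_sqrt_div_self {H : ℝ} (hH : 0 < H) (ε : ℝ) : H * √(ε / H) = √(ε * H) :=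
  calc H * √(ε / H) = √(H ^ 2) * √(ε / H) := by rw [Real.sqrt_sq hH.le]
    _ = √(ε * H) := by
      rw [← Real.sqrt_mul (sq_nonneg H)]
      congr 1
      field_simp

theorem le_add_half_mul_of_max_add_le {H ε c₁ c₂ lmin lam r : ℝ} (hH : 0 < H)
    (hlam : |lam - lmin| ≤ c₁ / 2 * √(ε * H))
    (hr : max 0 (-(2 * lam) / H) + (5 * c₁ + 2 * c₂) * √(ε / H) ≤ r) :
    (2 * c₁ + c₂) * √(ε * H) ≤ lmin + H * r / 2 := by
  have hHr : -(2 * lam) + (5 * c₁ + 2 * c₂) * √(ε * H) ≤ H * r := calc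
    -(2 * lam) + (5 * c₁ + 2 * c₂) * √(ε * H)
        = H * (-(2 * lam) / H + (5 * c₁ + 2 * c₂) * √(ε / H)) := by
      rw [mul_add, mul_div_cancel₀ _ hH.ne', mul_left_comm, Real.mul_sqrt_div_self hH]
    _ ≤ H * r := mul_le_mul_of_nonneg_left (by linarith [le_max_right 0 (-(2 * lam) / H)]) hH.le
  linarith [(abs_le.mp hlam).2]

theorem stmt_13_general (d : ℕ) (A : Matrix (Fin d) (Fin d) ℝ) (hA : A.IsHermitian)
    (H ε c₁ c₂ : ℝ) (hH : 0 < H)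
    (lmin : ℝ) (hlmin₁ : ∀ i, lmin ≤ hA.eigenvalues i)
    (lam : ℝ) (hlam : |lam - lmin| ≤ c₁ / 2 * Real.sqrt (ε * H))
    (r : ℝ) (hr : max 0 (-(2 * lam) / H) + (5 * c₁ + 2 * c₂) * Real.sqrt (ε / H) ≤ r) :
    (A + (H * r / 2) • (1 : Matrix (Fin d) (Fin d) ℝ)
        - ((2 * c₁ + c₂) * Real.sqrt (ε * H)) • (1 : Matrix (Fin d) (Fin d) ℝ)).PosSemidef ∧
    (A + (H * r / 2) • (1 : Matrix (Fin d) (Fin d) ℝ)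
        - (c₂ * Real.sqrt (ε * H)) • (1 : Matrix (Fin d) (Fin d) ℝ)).PosSemidef := by
  have hbound := le_add_half_mul_of_max_add_le hH hlam hr
  have hc₁S : 0 ≤ c₁ * √(ε * H) := by linarith [abs_nonneg (lam - lmin)]
  have psd_of_le : ∀ b ≤ lmin + H * r / 2,
      (A + (H * r / 2) • (1 : Matrix (Fin d) (Fin d) ℝ) - b • 1).PosSemidef := fun b hb => by
    rw [show A + (H * r / 2) • 1 - b • 1 = A - (b - H * r / 2) • 1 by rw [sub_smul]; abel]
    exact hA.posSemidef_sub_smul_one fun i => by linarith [hlmin₁ i]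
  exact ⟨psd_of_le _ hbound, psd_of_le _ (by linarith)⟩

/-- Let `A` be a `d×d` real symmetric matrix with smallest eigenvalue
`lmin`, let `H, ε, c₁, c₂ > 0`, and let `lam` satisfy `|lam − lmin| ≤ (c₁/2)√(εH)`. If
`r ≥ max{0, −2·lam/H} + (5c₁ + 2c₂)√(ε/H)`, then `A + (Hr/2)I − (2c₁ + c₂)√(εH) I` is
positive semidefinite; in particular `A + (Hr/2)I ⪰ c₂√(εH) I`. -/
theorem stmt_13 (d : ℕ) (A : Matrix (Fin d) (Fin d) ℝ) (hA : A.IsHermitian)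
    (H ε c₁ c₂ : ℝ) (hH : 0 < H) (hε : 0 < ε) (hc₁ : 0 < c₁) (hc₂ : 0 < c₂)
    (lmin : ℝ) (hlmin₁ : ∀ i, lmin ≤ hA.eigenvalues i) (hlmin₂ : ∃ i, hA.eigenvalues i = lmin)
    (lam : ℝ) (hlam : |lam - lmin| ≤ c₁ / 2 * Real.sqrt (ε * H))
    (r : ℝ) (hr : max 0 (-(2 * lam) / H) + (5 * c₁ + 2 * c₂) * Real.sqrt (ε / H) ≤ r) :
    (A + (H * r / 2) • (1 : Matrix (Fin d) (Fin d) ℝ)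
        - ((2 * c₁ + c₂) * Real.sqrt (ε * H)) • (1 : Matrix (Fin d) (Fin d) ℝ)).PosSemidef ∧
    (A + (H * r / 2) • (1 : Matrix (Fin d) (Fin d) ℝ)
        - (c₂ * Real.sqrt (ε * H)) • (1 : Matrix (Fin d) (Fin d) ℝ)).PosSemidef :=
  stmt_13_general d A hA H ε c₁ c₂ hH lmin hlmin₁ lam hlam r hr
end
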